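/- Safety of the two-phase checkpoint protocol: model each rank's state as an element of {ready, inPhase1, inPhase2, exitPhase2}, with transitions: ready → inPhase1 (enter barrier), inPhase1 → inPhase2 (enter collective, allowed only if no intend-to-checkpoint message has been received), inPhase2 → exitPhase2, exitPhase2 → ready. The coordinator sends do-ckpt only after every rank has acknowledged the intend-to-checkpoint message and no rank reports exitPhase2 or inPhase2 (ranks in phase 2 delay their acknowledgment until they exit and reset to ready). Then in any reachable global state at which do-ckpt is delivered, no rank is in state inPhase2. -/
import Mathlib


inductive RankState where
  | ready | inPhase1 | inPhase2 | exitPhase2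
deriving DecidableEq

/-- Global state of the two-phase checkpoint protocol. -/
structure PState (R : Type*) where
  flag : R → Bool
  st : R → RankState

open RankState in
/-- One transition of the two-phase checkpoint protocol: some rank `r` moves. -/
inductive PStep {R : Type*} [DecidableEq R] : PState R → PState R → Prop where
  /-- enter barrier: `ready → inPhase1` (always allowed) -/
  | enterBarrier (s : PState R) (r : R) (h : s.st r = ready) :
      PStep s ⟨s.flag, Function.update s.st r inPhase1⟩
  /-- enter collective: `inPhase1 → inPhase2`, only if the rank has not
      acknowledged intend-to-checkpoint -/
  | enterCollective (s : PState R) (r : R) (h : s.st r = inPhase1)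
      (hflag : s.flag r = false) :
      PStep s ⟨s.flag, Function.update s.st r inPhase2⟩
  /-- exit collective: `inPhase2 → exitPhase2` (always allowed) -/
  | exitCollective (s : PState R) (r : R) (h : s.st r = inPhase2) :
      PStep s ⟨s.flag, Function.update s.st r exitPhase2⟩
  /-- reset: `exitPhase2 → ready` (always allowed) -/
  | reset (s : PState R) (r : R) (h : s.st r = exitPhase2) :
      PStep s ⟨s.flag, Function.update s.st r ready⟩
  /-- acknowledge intend-to-checkpoint, only in state `ready` or `inPhase1` -/
  | ack (s : PState R) (r : R) (h : s.st r = ready ∨ s.st r = inPhase1) :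
      PStep s ⟨Function.update s.flag r true, s.st⟩

open RankState in
lemma two_phase_inv {R : Type*} [DecidableEq R]
    (init s : PState R)
    (hinit : ∀ r, init.flag r = false)
    (hreach : Relation.ReflTransGen PStep init s) :
    ∀ r, s.flag r = true → (s.st r = ready ∨ s.st r = inPhase1) := by
  induction hreach with
  | refl => intro r hr; simp [hinit r] at hr
  | tail _ hstep ih =>
    intro r hr
    cases hstep with
    | enterBarrier q h =>
      simp only at hr ⊢
      rcases eq_or_ne r q with rfl | hne
      · right; simp
      · rw [Function.update_of_ne hne]; exact ih r hr
    | enterCollective q h hflag =>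
      simp only at hr ⊢
      rcases eq_or_ne r q with rfl | hne
      · rw [hr] at hflag; cases hflag
      · rw [Function.update_of_ne hne]; exact ih r hr
    | exitCollective q h =>
      simp only at hr ⊢
      rcases eq_or_ne r q with rfl | hne
      · rcases ih r hr with h' | h' <;> rw [h'] at h <;> cases h
      · rw [Function.update_of_ne hne]; exact ih r hr
    | reset q h =>
      simp only at hr ⊢
      rcases eq_or_ne r q with rfl | hne
      · left; simp
      · rw [Function.update_of_ne hne]; exact ih r hr
    | ack q h =>
      simp only at hr ⊢
      rcases eq_or_ne r q with rfl | hne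
      · exact h
      · rw [Function.update_of_ne hne] at hr; exact ih r hr

open RankState in
/-- safety of the two-phase checkpoint protocol: in any state
reachable from an initial state (all flags false) in which do-ckpt is enabled
(all flags true), every rank is in state `ready` or `inPhase1`;
in particular no rank is in `inPhase2`. -/
theorem two_phase_safety {R : Type*} [DecidableEq R]
    (init s : PState R)
    (hinit : ∀ r, init.flag r = false)
    (hreach : Relation.ReflTransGen PStep init s)
    (henabled : ∀ r, s.flag r = true) :
    ∀ r, s.st r = ready ∨ s.st r = inPhase1 := by
  exact fun r => two_phase_inv init s hinit hreach r (henabled r)
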